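/- arXiv:2507.21670 — 3 statements merged into one kernel-verified Lean document; each statement's English description precedes it below -/
import Mathlib

section
/- Let n ≥ 1, let Γ ⊆ ℝⁿ be a compact measurable set, and let R : ℝⁿ → ℝ be measurable with 0 < R(r) ≤ M for all r ∈ Γ for some constant M < ∞. Suppose both sets Λ₁ = {r ∈ Γ : R(r) < 1} and Λ₂ = {r ∈ Γ : R(r) > 1} have positive Lebesgue measure. Then there exists a measurable function P₁ : ℝⁿ → ℝ with P₁(r) > 0 for all r ∈ Γ, P₁(r) = 0 for r ∉ Γ, ∫ P₁ dLebesgue = 1, and ∫_Γ R·P₁ dLebesgue = 1. Consequently, setting P₂ = R·P₁ on Γ (and 0 outside), the pair (P₁, P₂) are probability density functions whose density ratio is R on Γ, so the self-consistent binary classifier with induced density ratio R is the Bayes classifier for these densities. -/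
open MeasureTheory

/-- A bounded, positive, measurable density ratio on a compact
set whose sub- and super-level sets at 1 both have positive Lebesgue measure
arises from a pair of probability densities; hence the corresponding
self-consistent binary classifier is a Bayes classifier. -/
theorem binary_densities_exist_for_ratio
    (n : ℕ) (hn : 1 ≤ n)
    (Γ : Set (Fin n → ℝ)) (hΓc : IsCompact Γ) (hΓm : MeasurableSet Γ)
    (R : (Fin n → ℝ) → ℝ) (hRmeas : Measurable R)
    (M : ℝ)
    (hRpos : ∀ r ∈ Γ, 0 < R r) (hRbdd : ∀ r ∈ Γ, R r ≤ M)
    (hΛ₁ : 0 < volume {r ∈ Γ | R r < 1})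
    (hΛ₂ : 0 < volume {r ∈ Γ | 1 < R r}) :
    ∃ P₁ : (Fin n → ℝ) → ℝ,
      Measurable P₁ ∧
      (∀ r ∈ Γ, 0 < P₁ r) ∧
      (∀ r ∉ Γ, P₁ r = 0) ∧
      (∫ r, P₁ r = 1) ∧
      (∫ r in Γ, R r * P₁ r = 1) := by
  classical
  set L₁ : Set (Fin n → ℝ) := {r ∈ Γ | R r < 1} with hL₁def
  set L₂ : Set (Fin n → ℝ) := {r ∈ Γ | 1 < R r} with hL₂def
  set L₀ : Set (Fin n → ℝ) := {r ∈ Γ | R r = 1} with hL₀def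
  have hmL₁ : MeasurableSet L₁ := hΓm.inter (hRmeas measurableSet_Iio)
  have hmL₂ : MeasurableSet L₂ := hΓm.inter (hRmeas measurableSet_Ioi)
  have hmL₀ : MeasurableSet L₀ := hΓm.inter (hRmeas (measurableSet_singleton 1))
  have hsub₁ : L₁ ⊆ Γ := fun r hr => hr.1
  have hsub₂ : L₂ ⊆ Γ := fun r hr => hr.1
  have hsub₀ : L₀ ⊆ Γ := fun r hr => hr.1
  have hΓfin : volume Γ < ⊤ := hΓc.measure_lt_top
  have hfin₁ : volume L₁ < ⊤ := lt_of_le_of_lt (measure_mono hsub₁) hΓfin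
  have hfin₂ : volume L₂ < ⊤ := lt_of_le_of_lt (measure_mono hsub₂) hΓfin
  have hfin₀ : volume L₀ < ⊤ := lt_of_le_of_lt (measure_mono hsub₀) hΓfin
  set m1 : ℝ := (volume L₁).toReal with hm1def
  set m2 : ℝ := (volume L₂).toReal with hm2def
  set m0 : ℝ := (volume L₀).toReal with hm0def
  have hm1pos : 0 < m1 := ENNReal.toReal_pos hΛ₁.ne' hfin₁.ne
  have hm2pos : 0 < m2 := ENNReal.toReal_pos hΛ₂.ne' hfin₂.ne
  have hm0nn : 0 ≤ m0 := ENNReal.toReal_nonneg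
  -- integrability of R on Γ and subsets
  have hRintΓ : IntegrableOn R Γ volume := by
    apply Measure.integrableOn_of_bounded hΓfin.ne hRmeas.aestronglyMeasurable
      (M := M)
    refine (ae_restrict_iff' hΓm).2 (Filter.Eventually.of_forall fun x hx => ?_)
    rw [Real.norm_eq_abs, abs_of_pos (hRpos x hx)]
    exact hRbdd x hx
  have hRint₁ : IntegrableOn R L₁ volume := hRintΓ.mono_set hsub₁
  have hRint₂ : IntegrableOn R L₂ volume := hRintΓ.mono_set hsub₂
  have hRint₀ : IntegrableOn R L₀ volume := hRintΓ.mono_set hsub₀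
  set i1 : ℝ := ∫ x in L₁, R x with hi1def
  set i2 : ℝ := ∫ x in L₂, R x with hi2def
  have honeint₁ : IntegrableOn (fun _ => (1:ℝ)) L₁ volume :=
    integrableOn_const hfin₁.ne
  have honeint₂ : IntegrableOn (fun _ => (1:ℝ)) L₂ volume :=
    integrableOn_const hfin₂.ne
  -- d1 := m1 - i1 > 0
  have hd1 : 0 < m1 - i1 := by
    have hpos : 0 < ∫ x in L₁, (1 - R x) := by
      rw [setIntegral_pos_iff_support_of_nonneg_ae]
      · refine lt_of_lt_of_le hΛ₁ (measure_mono ?_)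
        intro x hx
        exact ⟨fun h => absurd (by linarith [sub_eq_zero.mp h] : (1:ℝ) ≤ R x)
          (not_le.2 hx.2), hx⟩
      · refine (ae_restrict_iff' hmL₁).2 (Filter.Eventually.of_forall fun x hx => ?_)
        show (0:ℝ) ≤ 1 - R x
        linarith [hx.2]
      · exact honeint₁.sub hRint₁
    have : ∫ x in L₁, (1 - R x) = m1 - i1 := by
      rw [integral_sub honeint₁ hRint₁, setIntegral_const, smul_eq_mul, mul_one]
      rfl
    linarith
  -- d2 := i2 - m2 > 0
  have hd2 : 0 < i2 - m2 := by
    have hpos : 0 < ∫ x in L₂, (R x - 1) := by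
      rw [setIntegral_pos_iff_support_of_nonneg_ae]
      · refine lt_of_lt_of_le hΛ₂ (measure_mono ?_)
        intro x hx
        exact ⟨fun h => absurd (by linarith [sub_eq_zero.mp h] : R x ≤ 1)
          (not_le.2 hx.2), hx⟩
      · refine (ae_restrict_iff' hmL₂).2 (Filter.Eventually.of_forall fun x hx => ?_)
        show (0:ℝ) ≤ R x - 1
        linarith [hx.2]
      · exact hRint₂.sub honeint₂
    have : ∫ x in L₂, (R x - 1) = i2 - m2 := by
      rw [integral_sub hRint₂ honeint₂, setIntegral_const, smul_eq_mul, mul_one]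
      rfl
    linarith
  -- ∫_{L₀} R = m0
  have hi0 : ∫ x in L₀, R x = m0 := by
    rw [setIntegral_congr_fun hmL₀ (fun x hx => hx.2)]
    rw [setIntegral_const, smul_eq_mul, mul_one]
    rfl
  set d1 : ℝ := m1 - i1 with hd1def
  set d2 : ℝ := i2 - m2 with hd2def
  set K : ℝ := d2 * m1 + d1 * m2 with hKdef
  have hK : 0 < K := add_pos (mul_pos hd2 hm1pos) (mul_pos hd1 hm2pos)
  set γ : ℝ := 1 / (2 * (m0 + 1)) with hγdef
  have hγpos : 0 < γ := by positivity
  have hγm0 : γ * m0 < 1 := by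
    rw [hγdef]
    rw [div_mul_eq_mul_div, div_lt_one (by positivity)]
    nlinarith
  set t : ℝ := (1 - γ * m0) / K with htdef
  have ht : 0 < t := div_pos (by linarith) hK
  have htK : t * K = 1 - γ * m0 := div_mul_cancel₀ _ hK.ne'
  -- the density
  refine ⟨fun r => L₁.indicator (fun _ => t * d2) r + L₂.indicator (fun _ => t * d1) r
    + L₀.indicator (fun _ => γ) r, ?_, ?_, ?_, ?_, ?_⟩
  · exact ((measurable_const.indicator hmL₁).add
      (measurable_const.indicator hmL₂)).add (measurable_const.indicator hmL₀)
  · intro r hr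
    show 0 < L₁.indicator (fun _ => t * d2) r + L₂.indicator (fun _ => t * d1) r
      + L₀.indicator (fun _ => γ) r
    have h1 : 0 ≤ L₁.indicator (fun _ => t * d2) r :=
      Set.indicator_nonneg (fun _ _ => le_of_lt (mul_pos ht hd2)) r
    have h2 : 0 ≤ L₂.indicator (fun _ => t * d1) r :=
      Set.indicator_nonneg (fun _ _ => le_of_lt (mul_pos ht hd1)) r
    have h0 : 0 ≤ L₀.indicator (fun _ => γ) r :=
      Set.indicator_nonneg (fun _ _ => le_of_lt hγpos) r
    rcases lt_trichotomy (R r) 1 with h | h | h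
    · have : L₁.indicator (fun _ => t * d2) r = t * d2 :=
        Set.indicator_of_mem (show r ∈ L₁ from ⟨hr, h⟩) _
      rw [this]
      have := mul_pos ht hd2
      linarith
    · have : L₀.indicator (fun _ => γ) r = γ := Set.indicator_of_mem (show r ∈ L₀ from ⟨hr, h⟩) _
      rw [this]
      linarith
    · have : L₂.indicator (fun _ => t * d1) r = t * d1 :=
        Set.indicator_of_mem (show r ∈ L₂ from ⟨hr, h⟩) _
      rw [this]
      have := mul_pos ht hd1
      linarith
  · intro r hr
    show L₁.indicator (fun _ => t * d2) r + L₂.indicator (fun _ => t * d1) r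
      + L₀.indicator (fun _ => γ) r = 0
    rw [Set.indicator_of_notMem (fun h => hr (hsub₁ h)),
      Set.indicator_of_notMem (fun h => hr (hsub₂ h)),
      Set.indicator_of_notMem (fun h => hr (hsub₀ h))]
    ring
  · -- total integral is 1
    have hi₁ : Integrable (L₁.indicator fun _ => t * d2) volume :=
      (integrable_indicator_iff hmL₁).2 (integrableOn_const hfin₁.ne)
    have hi₂ : Integrable (L₂.indicator fun _ => t * d1) volume :=
      (integrable_indicator_iff hmL₂).2 (integrableOn_const hfin₂.ne)
    have hi₀ : Integrable (L₀.indicator fun _ => γ) volume :=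
      (integrable_indicator_iff hmL₀).2 (integrableOn_const hfin₀.ne)
    show (∫ r, L₁.indicator (fun _ => t * d2) r + L₂.indicator (fun _ => t * d1) r
      + L₀.indicator (fun _ => γ) r) = 1
    have hadd : Integrable (fun r => L₁.indicator (fun _ => t * d2) r
        + L₂.indicator (fun _ => t * d1) r) volume := hi₁.add hi₂
    rw [integral_add hadd hi₀, integral_add hi₁ hi₂,
      integral_indicator_const _ hmL₁, integral_indicator_const _ hmL₂,
      integral_indicator_const _ hmL₀, smul_eq_mul, smul_eq_mul, smul_eq_mul,
      measureReal_def, measureReal_def, measureReal_def, ← hm1def, ← hm2def, ← hm0def]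
    have hexp : m1 * (t * d2) + m2 * (t * d1) + m0 * γ = t * K + γ * m0 := by
      rw [hKdef]; ring
    rw [hexp, htK]
    ring
  · -- weighted integral is 1
    have hpt : ∀ r, R r * (L₁.indicator (fun _ => t * d2) r
        + L₂.indicator (fun _ => t * d1) r + L₀.indicator (fun _ => γ) r)
        = L₁.indicator (fun x => t * d2 * R x) r
        + L₂.indicator (fun x => t * d1 * R x) r
        + L₀.indicator (fun x => γ * R x) r := by
      intro r
      simp only [Set.indicator_apply]
      split_ifs <;> ring
    simp only [hpt]
    have key : ∀ (S : Set (Fin n → ℝ)), MeasurableSet S → S ⊆ Γ → ∀ c : ℝ,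
        ∫ r in Γ, S.indicator (fun x => c * R x) r = c * ∫ x in S, R x := by
      intro S hS hSΓ c
      rw [setIntegral_indicator hS, Set.inter_eq_self_of_subset_right hSΓ,
        integral_const_mul]
    have hint : ∀ (S : Set (Fin n → ℝ)), MeasurableSet S → S ⊆ Γ →
        IntegrableOn R S volume → ∀ c : ℝ,
        Integrable (S.indicator fun x => c * R x) (volume.restrict Γ) := by
      intro S hS hSΓ hRS c
      rw [integrable_indicator_iff hS]
      have : (volume.restrict Γ).restrict S = volume.restrict S := by
        rw [Measure.restrict_restrict hS, Set.inter_eq_self_of_subset_left hSΓ]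
      unfold IntegrableOn
      rw [this]
      exact hRS.const_mul c
    have haddΓ : Integrable (fun r => L₁.indicator (fun x => t * d2 * R x) r
        + L₂.indicator (fun x => t * d1 * R x) r) (volume.restrict Γ) :=
      (hint L₁ hmL₁ hsub₁ hRint₁ _).add (hint L₂ hmL₂ hsub₂ hRint₂ _)
    rw [integral_add haddΓ (hint L₀ hmL₀ hsub₀ hRint₀ _),
      integral_add (hint L₁ hmL₁ hsub₁ hRint₁ _) (hint L₂ hmL₂ hsub₂ hRint₂ _),
      key L₁ hmL₁ hsub₁ _, key L₂ hmL₂ hsub₂ _, key L₀ hmL₀ hsub₀ _,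
      ← hi1def, ← hi2def, hi0]
    have hexp : t * d2 * i1 + t * d1 * i2 + γ * m0 = t * K + γ * m0 := by
      rw [hKdef, hd1def, hd2def]; ring
    rw [hexp, htK]
    ring
end

section
/- Let K ≥ 1, let P : Fin K → ℝ satisfy P(j) > 0 for all j (the values of the class-conditional densities at a fixed point r), and let χ : Fin K → ℝ satisfy χ(j) > 0 for all j and ∑_j χ(j) = 1. Then for all i, j: χ(i) / (∑_k χ(k)·(P(k)/P(i))) ≤ χ(j) / (∑_k χ(k)·(P(k)/P(j))) if and only if χ(i)·P(i) ≤ χ(j)·P(j). Hence the class maximizing the pairwise-ratio expression χ(j)/∑_k χ(k)·R_{j,k} coincides with the class maximizing the Bayes posterior χ(j)·P(j)/∑_k χ(k)·P(k), so the multiclass Bayes classifier can be constructed from its pairwise density ratios alone. -/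
/-- The pairwise-ratio score ordering coincides with the ordering
of the Bayes posterior numerators, so the multiclass Bayes classifier can be
constructed from pairwise density ratios alone. -/
theorem pairwise_score_order_iff_bayes_order
    (K : ℕ) (hK : 1 ≤ K)
    (P : Fin K → ℝ) (hP : ∀ j, 0 < P j)
    (χ : Fin K → ℝ) (hχ : ∀ j, 0 < χ j) (hsum : ∑ j, χ j = 1) :
    ∀ i j : Fin K,
      χ i / (∑ k, χ k * (P k / P i)) ≤ χ j / (∑ k, χ k * (P k / P j)) ↔
      χ i * P i ≤ χ j * P j := by
  have hS : 0 < ∑ k, χ k * P k := by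
    apply Finset.sum_pos
    · intro k _; exact mul_pos (hχ k) (hP k)
    · exact Finset.univ_nonempty_iff.mpr (Fin.pos_iff_nonempty.mp hK)
  have key : ∀ m : Fin K, χ m / (∑ k, χ k * (P k / P m))
      = (χ m * P m) / (∑ k, χ k * P k) := by
    intro m
    have hPm := (hP m).ne'
    have : (∑ k, χ k * (P k / P m)) = (∑ k, χ k * P k) / P m := by
      rw [Finset.sum_div]
      exact Finset.sum_congr rfl fun k _ => by field_simp
    rw [this]; field_simp
  intro i j
  rw [key i, key j, div_le_div_iff_of_pos_right hS]
end

section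
/- Let K ≥ 1, let P : Fin K → ℝ≥0∞ be finite values (the class-conditional densities at a fixed point r), let J = {j : P(j) ≠ 0} be nonempty, and let χ : Fin K → ℝ≥0∞ satisfy 0 < χ(j) < ∞ for all j. Let R̃ : Fin K → Fin K → ℝ≥0∞ be any extension of the density ratios such that R̃(j,k) = P(k)/P(j) whenever P(j) ≠ 0 or P(k) ≠ 0 (with the ℝ≥0∞ convention a/0 = ∞ for a > 0) and R̃(j,k) ∈ [0,∞] arbitrary otherwise. Define the score s(j) = χ(j) / ∑_k χ(k)·R̃(j,k) in ℝ≥0∞. Then: (a) s(j) = 0 for every j ∉ J, and (b) s(j) = χ(j)·P(j) / ∑_{k ∈ J} χ(k)·P(k) for every j ∈ J. Consequently, the class maximizing s over all K classes lies in J and coincides with the Bayes-optimal class among the classes whose density is positive at r, regardless of how the indeterminate ratios are extended. -/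
open ENNReal

/- STATEMENT 15: For any extension of the density ratios to indeterminate
points, the pairwise-ratio score vanishes outside the support classes and
reduces to the Bayes posterior on the support classes, regardless of the
extension. -/
open Classical in
theorem extended_score_recovers_bayes
    (K : ℕ) (hK : 1 ≤ K)
    (P : Fin K → ℝ≥0∞) (hPfin : ∀ j, P j ≠ ⊤)
    (hJ : ∃ j, P j ≠ 0)
    (χ : Fin K → ℝ≥0∞) (hχpos : ∀ j, 0 < χ j) (hχfin : ∀ j, χ j < ⊤)
    (R : Fin K → Fin K → ℝ≥0∞)
    (hR : ∀ j k, (P j ≠ 0 ∨ P k ≠ 0) → R j k = P k / P j) :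
    (∀ j, P j = 0 → χ j / (∑ k, χ k * R j k) = 0) ∧
    (∀ j, P j ≠ 0 →
      χ j / (∑ k, χ k * R j k)
        = χ j * P j / (∑ k ∈ Finset.univ.filter (fun k => P k ≠ 0), χ k * P k)) := by
  obtain ⟨j0, hj0⟩ := hJ
  constructor
  · intro j hj
    have hjk : R j j0 = P j0 / P j := hR j j0 (Or.inr hj0)
    have htop : χ j0 * R j j0 = ⊤ := by
      rw [hjk, hj, ENNReal.div_zero hj0, ENNReal.mul_top (hχpos j0).ne']
    have hle : χ j0 * R j j0 ≤ ∑ k, χ k * R j k :=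
      Finset.single_le_sum (f := fun k => χ k * R j k)
        (fun k _ => zero_le) (Finset.mem_univ j0)
    have hsum : (∑ k, χ k * R j k) = ⊤ := eq_top_iff.mpr (htop ▸ hle)
    rw [hsum, ENNReal.div_top]
  · intro j hj
    set S := ∑ k ∈ Finset.univ.filter (fun k => P k ≠ 0), χ k * P k with hS
    have hS0 : S ≠ 0 := by
      intro h
      have := Finset.sum_eq_zero_iff.mp h j0 (by simp [hj0])
      exact (hχpos j0).ne' (by
        rcases mul_eq_zero.mp this with h1 | h1
        · exact h1
        · exact absurd h1 hj0)
    have hStop : S ≠ ⊤ := by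
      exact (ENNReal.sum_lt_top.mpr fun k _ =>
        ENNReal.mul_lt_top (hχfin k) (hPfin k).lt_top).ne
    have hsum : (∑ k, χ k * R j k) = S / P j := by
      have h1 : (∑ k, χ k * R j k) = ∑ k, χ k * P k / P j := by
        refine Finset.sum_congr rfl fun k _ => ?_
        rw [hR j k (Or.inl hj), ← mul_div_assoc]
      rw [h1, hS]
      rw [show (∑ k, χ k * P k / P j) = (∑ k, χ k * P k) / P j by
        simp only [div_eq_mul_inv, Finset.sum_mul]]
      congr 1
      symm
      refine Finset.sum_subset (Finset.filter_subset _ _) ?_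
      intro k _ hk
      simp only [Finset.mem_filter, Finset.mem_univ, true_and, not_not] at hk
      simp [hk]
    rw [hsum, div_eq_mul_inv, div_eq_mul_inv, ENNReal.mul_inv (Or.inl hS0) (Or.inl hStop),
      inv_inv, ← mul_assoc, mul_comm (χ j) S⁻¹]
    rw [div_eq_mul_inv, mul_comm (χ j * P j) S⁻¹, ← mul_assoc]
end
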